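/- (One-sided t Bayes factor.) For every ν > 0, τ > 0, r ≥ 1 and t ∈ ℝ, with y = τt/√((ν+t²)(1+τ²)) and c = (1+τ²)^{−(r+1/2)}: ∫_0^∞ f_{ν,λ}(t) j⁺(λ|τ²,r) dλ = f_ν(t) · c · [ ₂F₁((ν+1)/2, r+1/2, 1/2; y²) + 2y · (Γ(ν/2+1)/Γ((ν+1)/2)) · (Γ(r+1)/Γ(r+1/2)) · ₂F₁(ν/2+1, r+1, 3/2; y²) ]. -/

import Mathlib

open Real MeasureTheory Filter

/-- Rising factorial (Pochhammer symbol) `(a)_k`. -/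
noncomputable def risingFac (a : ℝ) (k : ℕ) : ℝ := (ascPochhammer ℝ k).eval a

/-- Gaussian hypergeometric function `₂F₁(a, b, c; x)` (as a series). -/
noncomputable def twoF1 (a b c x : ℝ) : ℝ :=
  ∑' k : ℕ, (risingFac a k * risingFac b k / (risingFac c k * (Nat.factorial k : ℝ))) * x ^ k

/-- Central `t` density with `ν` degrees of freedom. -/
noncomputable def tPdf (ν t : ℝ) : ℝ :=
  Real.Gamma ((ν + 1) / 2) / (Real.sqrt (ν * Real.pi) * Real.Gamma (ν / 2)) *
    (1 + t ^ 2 / ν) ^ (-((ν + 1) / 2))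

/-- Noncentral `t` density with `ν` degrees of freedom and noncentrality `lam`. -/
noncomputable def nctPdf (ν lam t : ℝ) : ℝ :=
  tPdf ν t * Real.exp (-lam ^ 2 / 2) *
    ((∑' k : ℕ, (risingFac ((ν + 1) / 2) k / (risingFac (1 / 2) k * (Nat.factorial k : ℝ))) *
        (lam ^ 2 * t ^ 2 / (2 * (t ^ 2 + ν))) ^ k)
      + (Real.sqrt 2 * lam * t * Real.Gamma (ν / 2 + 1)) /
          (Real.sqrt (t ^ 2 + ν) * Real.Gamma ((ν + 1) / 2)) *
        ∑' k : ℕ, (risingFac (ν / 2 + 1) k / (risingFac (3 / 2) k * (Nat.factorial k : ℝ))) *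
          (lam ^ 2 * t ^ 2 / (2 * (t ^ 2 + ν))) ^ k)

/-- Normal-moment density `j(λ | τ², r)` of order `r`. -/
noncomputable def normalMomentPdf (τ r l : ℝ) : ℝ :=
  (l ^ 2) ^ r / ((2 * τ ^ 2) ^ (r + 1 / 2) * Real.Gamma (r + 1 / 2)) *
    Real.exp (-l ^ 2 / (2 * τ ^ 2))

/-- One-sided normal-moment density `j⁺(λ | τ², r) = 2 j(λ | τ², r)` on `(0, ∞)`. -/
noncomputable def normalMomentPdfPos (τ r l : ℝ) : ℝ := 2 * normalMomentPdf τ r l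

/-!
Both series in the noncentral `t` density are confluent series `₁F₁(·; ·; λ² s)` with
`s = t²/(2(t² + ν))`. Multiplied by the prior they become series of Gaussian moments
`∫₀^∞ λ^(2(b+k)-1) e^(-α λ²) dλ = Γ(b) (b)_k / (2 α^(b+k))` with `α = (1 + τ²)/(2τ²)`, and the
new Pochhammer factor `(b)_k` turns each `₁F₁` into a `₂F₁` at `s/α = y² < 1`. That `₂F₁` series
converges absolutely, which justifies integrating term by term.
-/

open Set

lemma risingFac_succ (a : ℝ) (k : ℕ) : risingFac a (k + 1) = risingFac a k * (a + k) :=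
  ascPochhammer_succ_eval k a

lemma risingFac_pos {a : ℝ} (ha : 0 < a) (k : ℕ) : 0 < risingFac a k :=
  ascPochhammer_pos k a ha

lemma Gamma_add_natCast_eq_mul_risingFac {a : ℝ} (ha : 0 < a) (k : ℕ) :
    Gamma (a + k) = Gamma a * risingFac a k := by
  induction k with
  | zero => simp [risingFac]
  | succ k ih =>
    rw [Nat.cast_succ, ← add_assoc, Gamma_add_one (by positivity), ih, risingFac_succ]
    ring

noncomputable def oneF1Term (a c z : ℝ) (k : ℕ) : ℝ :=
  risingFac a k / (risingFac c k * (Nat.factorial k : ℝ)) * z ^ k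

noncomputable def twoF1Term (a b c x : ℝ) (k : ℕ) : ℝ :=
  risingFac a k * risingFac b k / (risingFac c k * (Nat.factorial k : ℝ)) * x ^ k

lemma oneF1Term_nonneg {a c z : ℝ} (ha : 0 < a) (hc : 0 < c) (hz : 0 ≤ z) (k : ℕ) :
    0 ≤ oneF1Term a c z k := by
  have := risingFac_pos ha k
  have := risingFac_pos hc k
  unfold oneF1Term
  positivity

lemma twoF1Term_nonneg {a b c x : ℝ} (ha : 0 < a) (hb : 0 < b) (hc : 0 < c) (hx : 0 ≤ x)
    (k : ℕ) : 0 ≤ twoF1Term a b c x k := by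
  have := risingFac_pos ha k
  have := risingFac_pos hb k
  have := risingFac_pos hc k
  unfold twoF1Term
  positivity

lemma twoF1Term_eq_ordinaryHypergeometricSeries (a b c x : ℝ) (k : ℕ) :
    twoF1Term a b c x k = ordinaryHypergeometricSeries ℝ a b c k fun _ => x := by
  rw [ordinaryHypergeometricSeries_apply_eq, twoF1Term, smul_eq_mul]
  unfold risingFac
  field_simp

lemma summable_twoF1Term {a b c x : ℝ} (ha : 0 < a) (hb : 0 < b) (hc : 0 < c) (hx : |x| < 1) :
    Summable (twoF1Term a b c x) := by
  have habc (k : ℕ) : (k : ℝ) ≠ -a ∧ (k : ℝ) ≠ -b ∧ (k : ℝ) ≠ -c := by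
    have := k.cast_nonneg (α := ℝ)
    exact ⟨by linarith, by linarith, by linarith⟩
  have hx' : x ∈ Metric.eball 0 (ordinaryHypergeometricSeries ℝ a b c).radius := by
    rwa [ordinaryHypergeometricSeries_radius_eq_one ℝ a b c habc, Metric.mem_eball,
      edist_zero_right, ← ofReal_norm, ENNReal.ofReal_lt_one]
  simpa only [← twoF1Term_eq_ordinaryHypergeometricSeries] using
    (ordinaryHypergeometricSeries ℝ a b c).summable hx'

lemma twoF1_pos {a b c x : ℝ} (ha : 0 < a) (hb : 0 < b) (hc : 0 < c) (hx₀ : 0 ≤ x) (hx₁ : x < 1) :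
    0 < twoF1 a b c x :=
  (summable_twoF1Term ha hb hc (abs_lt.2 ⟨by linarith, hx₁⟩)).tsum_pos
    (twoF1Term_nonneg ha hb hc hx₀) 0 (by simp [twoF1Term, risingFac])

noncomputable def gaussianMoment (α b : ℝ) : ℝ := Gamma b / (2 * α ^ b)

lemma gaussianMoment_pos {α b : ℝ} (hα : 0 < α) (hb : 0 < b) : 0 < gaussianMoment α b := by
  have := Gamma_pos_of_pos hb
  unfold gaussianMoment
  positivity

lemma integral_rpow_mul_exp_neg_mul_sq_eq_gaussianMoment {α b : ℝ} (hα : 0 < α) (hb : 0 < b) :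
    ∫ l in Ioi 0, l ^ (2 * b - 1) * exp (-α * l ^ 2) = gaussianMoment α b := by
  have h := integral_rpow_mul_exp_neg_mul_rpow two_pos (by linarith : -1 < 2 * b - 1) hα
  simp only [rpow_two] at h
  rw [h, gaussianMoment, show -(2 * b - 1 + 1) / 2 = -b by ring,
    show (2 * b - 1 + 1) / 2 = b by ring, rpow_neg hα.le]
  field_simp

lemma gaussianMoment_add_natCast {α b : ℝ} (hα : 0 < α) (hb : 0 < b) (k : ℕ) :
    gaussianMoment α (b + k) = gaussianMoment α b * (risingFac b k / α ^ k) := by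
  rw [gaussianMoment, gaussianMoment, Gamma_add_natCast_eq_mul_risingFac hb, rpow_add hα,
    rpow_natCast]
  field_simp

lemma gaussianMoment_add_half {α b : ℝ} (hα : 0 < α) (hb : 0 < b) :
    gaussianMoment α (b + 1 / 2) = gaussianMoment α b * (Gamma (b + 1 / 2) / Gamma b) / √α := by
  have := Gamma_pos_of_pos hb
  rw [gaussianMoment, gaussianMoment, rpow_add hα, sqrt_eq_rpow]
  field_simp

theorem integral_tsum_mul_rpow_mul_exp_neg_mul_sq {ι : Type*} [Countable ι] {α : ℝ} (hα : 0 < α)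
    {c b : ι → ℝ} (hb : ∀ i, 0 < b i) (hc : Summable fun i => |c i| * gaussianMoment α (b i)) :
    ∫ l in Ioi 0, ∑' i, c i * (l ^ (2 * b i - 1) * exp (-α * l ^ 2)) =
      ∑' i, c i * gaussianMoment α (b i) := by
  have hint i : IntegrableOn (fun l => l ^ (2 * b i - 1) * exp (-α * l ^ 2)) (Ioi 0) :=
    integrableOn_rpow_mul_exp_neg_mul_sq hα (by linarith [hb i])
  have hnorm i : ∫ l in Ioi 0, ‖c i * (l ^ (2 * b i - 1) * exp (-α * l ^ 2))‖ =
      |c i| * gaussianMoment α (b i) := by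
    rw [← integral_rpow_mul_exp_neg_mul_sq_eq_gaussianMoment hα (hb i), ← integral_const_mul]
    refine setIntegral_congr_fun measurableSet_Ioi fun l hl => ?_
    rw [norm_mul, Real.norm_eq_abs,
      Real.norm_of_nonneg (mul_nonneg (rpow_nonneg hl.out.le _) (exp_pos _).le)]
  rw [← integral_tsum_of_summable_integral_norm (fun i => (hint i).const_mul (c i))
    (by simpa only [hnorm] using hc)]
  simp_rw [integral_const_mul, integral_rpow_mul_exp_neg_mul_sq_eq_gaussianMoment hα (hb _)]

lemma oneF1Term_mul_gaussianMoment {α b : ℝ} (hα : 0 < α) (hb : 0 < b) (a c w : ℝ) (k : ℕ) :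
    oneF1Term a c w k * gaussianMoment α (b + k) =
      gaussianMoment α b * twoF1Term a b c (w / α) k := by
  rw [gaussianMoment_add_natCast hα hb, oneF1Term, twoF1Term, div_pow]
  ring

theorem integral_tsum_oneF1Term_mul_rpow_mul_exp_neg_mul_sq {α a b c w : ℝ} (hα : 0 < α)
    (ha : 0 < a) (hb : 0 < b) (hc : 0 < c) (hw₀ : 0 ≤ w) (hw : w < α) :
    ∫ l in Ioi 0, ∑' k : ℕ, oneF1Term a c w k * (l ^ (2 * (b + k) - 1) * exp (-α * l ^ 2)) =
      gaussianMoment α b * twoF1 a b c (w / α) := by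
  have hx : |w / α| < 1 := by
    rwa [abs_of_nonneg (by positivity), div_lt_one hα]
  rw [integral_tsum_mul_rpow_mul_exp_neg_mul_sq hα (b := fun k : ℕ => b + k)
    (fun k => by positivity), twoF1, ← tsum_mul_left]
  · exact tsum_congr (oneF1Term_mul_gaussianMoment hα hb a c w)
  · simpa only [abs_of_nonneg (oneF1Term_nonneg ha hc hw₀ _), oneF1Term_mul_gaussianMoment hα hb]
      using (summable_twoF1Term ha hb hc hx).mul_left (gaussianMoment α b)

theorem integrableOn_tsum_oneF1Term_mul_rpow_mul_exp_neg_mul_sq {α a b c w : ℝ} (hα : 0 < α)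
    (ha : 0 < a) (hb : 0 < b) (hc : 0 < c) (hw₀ : 0 ≤ w) (hw : w < α) :
    IntegrableOn
      (fun l => ∑' k : ℕ, oneF1Term a c w k * (l ^ (2 * (b + k) - 1) * exp (-α * l ^ 2)))
      (Ioi 0) := by
  -- a non-integrable function would have the junk integral `0`
  refine Integrable.of_integral_ne_zero ?_
  rw [integral_tsum_oneF1Term_mul_rpow_mul_exp_neg_mul_sq hα ha hb hc hw₀ hw]
  exact (mul_pos (gaussianMoment_pos hα hb)
    (twoF1_pos ha hb hc (by positivity) ((div_lt_one hα).2 hw))).ne'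

/-- The rate of the Gaussian `e^(-λ²/2) e^(-λ²/(2τ²))` formed by the likelihood and the prior. -/
noncomputable def combinedRate (τ : ℝ) : ℝ := (1 + τ ^ 2) / (2 * τ ^ 2)

/-- The series variable `w` of the noncentral `t` density is `λ² * nctArg ν t`. -/
noncomputable def nctArg (ν t : ℝ) : ℝ := t ^ 2 / (2 * (t ^ 2 + ν))

/-- The coefficient of the odd series of the noncentral `t` density is `λ * nctOddCoeff ν t`. -/
noncomputable def nctOddCoeff (ν t : ℝ) : ℝ :=
  √2 * t * Gamma (ν / 2 + 1) / (√(t ^ 2 + ν) * Gamma ((ν + 1) / 2))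

lemma combinedRate_pos {τ : ℝ} (hτ : τ ≠ 0) : 0 < combinedRate τ := by
  unfold combinedRate
  positivity

lemma two_div_mul_gaussianMoment_combinedRate {τ b : ℝ} (hτ : τ ≠ 0) (hb : 0 < b) :
    2 / ((2 * τ ^ 2) ^ b * Gamma b) * gaussianMoment (combinedRate τ) b = (1 + τ ^ 2) ^ (-b) := by
  have := Gamma_pos_of_pos hb
  rw [gaussianMoment, combinedRate, div_rpow (by positivity) (by positivity),
    rpow_neg (by positivity)]
  field_simp

lemma nctArg_nonneg {ν : ℝ} (hν : 0 < ν) (t : ℝ) : 0 ≤ nctArg ν t := by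
  unfold nctArg
  positivity

lemma nctArg_lt_combinedRate {ν τ : ℝ} (hν : 0 < ν) (hτ : τ ≠ 0) (t : ℝ) :
    nctArg ν t < combinedRate τ := by
  rw [nctArg, combinedRate, div_lt_div_iff₀ (by positivity) (by positivity)]
  nlinarith [mul_pos hν (pow_pos (abs_pos.2 hτ) 2), sq_abs τ, sq_nonneg t]

lemma nctArg_div_combinedRate {ν τ : ℝ} (hν : 0 < ν) (hτ : τ ≠ 0) (t : ℝ) :
    nctArg ν t / combinedRate τ = (τ * t / √((ν + t ^ 2) * (1 + τ ^ 2))) ^ 2 := by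
  rw [nctArg, combinedRate, div_pow, mul_pow, sq_sqrt (by positivity)]
  field_simp
  ring

lemma nctOddCoeff_div_sqrt_combinedRate {ν τ : ℝ} (hν : 0 < ν) (hτ : 0 < τ) (t : ℝ) :
    nctOddCoeff ν t / √(combinedRate τ) =
      2 * (τ * t / √((ν + t ^ 2) * (1 + τ ^ 2))) * (Gamma (ν / 2 + 1) / Gamma ((ν + 1) / 2)) := by
  have := Gamma_pos_of_pos (show 0 < (ν + 1) / 2 by positivity)
  rw [nctOddCoeff, combinedRate, sqrt_div (by positivity), sqrt_mul (by positivity),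
    sqrt_mul (by positivity), sqrt_sq hτ.le]
  field_simp
  rw [sq_sqrt (by positivity), add_comm ν]
  ring

lemma oneF1Term_mul_rpow {l : ℝ} (hl : 0 < l) (a b c w : ℝ) (k : ℕ) :
    oneF1Term a c w k * l ^ (2 * (b + k) - 1) = oneF1Term a c (w * l ^ 2) k * l ^ (2 * b - 1) := by
  have hexp : 2 * (b + k) - 1 = 2 * b - 1 + (2 * k : ℕ) := by
    push_cast
    ring
  rw [oneF1Term, oneF1Term, mul_pow, hexp, rpow_add hl, rpow_natCast, pow_mul]
  ring

lemma nctPdf_mul_normalMomentPdfPos_eq {ν τ r t l : ℝ} (hτ : τ ≠ 0) (hl : 0 < l) :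
    nctPdf ν l t * normalMomentPdfPos τ r l =
      tPdf ν t * (2 / ((2 * τ ^ 2) ^ (r + 1 / 2) * Gamma (r + 1 / 2))) *
        (∑' k : ℕ, oneF1Term ((ν + 1) / 2) (1 / 2) (nctArg ν t) k *
            (l ^ (2 * (r + 1 / 2 + k) - 1) * exp (-combinedRate τ * l ^ 2)) +
          nctOddCoeff ν t * ∑' k : ℕ, oneF1Term (ν / 2 + 1) (3 / 2) (nctArg ν t) k *
            (l ^ (2 * (r + 1 + k) - 1) * exp (-combinedRate τ * l ^ 2))) := by
  have hexp : exp (-combinedRate τ * l ^ 2) = exp (-l ^ 2 / 2) * exp (-l ^ 2 / (2 * τ ^ 2)) := by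
    rw [← exp_add, combinedRate]
    congr 1
    field_simp
    ring
  have hz : nctArg ν t * l ^ 2 = l ^ 2 * t ^ 2 / (2 * (t ^ 2 + ν)) := by
    rw [nctArg]
    ring
  have hsq : (l ^ 2) ^ r = l ^ (2 * r) := by
    rw [← rpow_natCast, ← rpow_mul hl.le]
    norm_num
  have heven : l ^ (2 * (r + 1 / 2) - 1) = (l ^ 2) ^ r := by
    rw [hsq]
    ring_nf
  have hodd : l ^ (2 * (r + 1) - 1) = l * (l ^ 2) ^ r := by
    rw [hsq, show 2 * (r + 1) - 1 = 1 + 2 * r by ring, rpow_add hl, rpow_one]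
  simp_rw [← mul_assoc (oneF1Term _ _ _ _), oneF1Term_mul_rpow hl]
  simp only [tsum_mul_right]
  rw [hz, heven, hodd, hexp, nctOddCoeff]
  simp only [nctPdf, normalMomentPdfPos, normalMomentPdf, oneF1Term]
  ring

/-- Theorem 2.4: one-sided `t` Bayes factor. -/
theorem one_sided_t_bayes_factor (ν τ r t y c : ℝ) (hν : 0 < ν) (hτ : 0 < τ) (hr : 1 ≤ r)
    (hy : y = τ * t / Real.sqrt ((ν + t ^ 2) * (1 + τ ^ 2)))
    (hc : c = (1 + τ ^ 2) ^ (-(r + 1 / 2))) :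
    ∫ l in Set.Ioi (0 : ℝ), nctPdf ν l t * normalMomentPdfPos τ r l
      = tPdf ν t * c *
          (twoF1 ((ν + 1) / 2) (r + 1 / 2) (1 / 2) (y ^ 2)
            + 2 * y * (Real.Gamma (ν / 2 + 1) / Real.Gamma ((ν + 1) / 2)) *
                (Real.Gamma (r + 1) / Real.Gamma (r + 1 / 2)) *
                twoF1 (ν / 2 + 1) (r + 1) (3 / 2) (y ^ 2)) := by
  subst hy hc
  have hα := combinedRate_pos hτ.ne'
  have hw₀ := nctArg_nonneg hν t
  have hw := nctArg_lt_combinedRate hν hτ.ne' t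
  have hb : 0 < r + 1 / 2 := by positivity
  have hM : gaussianMoment (combinedRate τ) (r + 1) = gaussianMoment (combinedRate τ) (r + 1 / 2) *
      (Gamma (r + 1) / Gamma (r + 1 / 2)) / √(combinedRate τ) := by
    simpa only [add_assoc, add_halves] using gaussianMoment_add_half hα hb
  have hE := integrableOn_tsum_oneF1Term_mul_rpow_mul_exp_neg_mul_sq hα
    (show 0 < (ν + 1) / 2 by positivity) hb one_half_pos hw₀ hw
  have hO := integrableOn_tsum_oneF1Term_mul_rpow_mul_exp_neg_mul_sq hα
    (show 0 < ν / 2 + 1 by positivity) (show 0 < r + 1 by positivity)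
    (show (0 : ℝ) < 3 / 2 by norm_num) hw₀ hw
  rw [setIntegral_congr_fun measurableSet_Ioi fun _ hl => nctPdf_mul_normalMomentPdfPos_eq hτ.ne' hl,
    integral_const_mul, integral_add hE (hO.const_mul _), integral_const_mul,
    integral_tsum_oneF1Term_mul_rpow_mul_exp_neg_mul_sq hα (by positivity) hb one_half_pos hw₀ hw,
    integral_tsum_oneF1Term_mul_rpow_mul_exp_neg_mul_sq hα (by positivity) (by positivity)
      (by norm_num) hw₀ hw,
    hM, nctArg_div_combinedRate hν hτ.ne', ← nctOddCoeff_div_sqrt_combinedRate hν hτ,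
    ← two_div_mul_gaussianMoment_combinedRate hτ.ne' hb]
  ring
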